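/- arXiv:2301.12070 — 8 statements merged into one kernel-verified Lean document; each statement's English description precedes it below -/
import Mathlib

section
/- For every strict finitistic model W and every formula A, if A is assertible in W then A is prevalent in W (the full prevalence property). -/
/-- Propositional formulas over a countably infinite set of variables (indexed by ℕ). -/
inductive Fm : Type
  | bot : Fm
  | var : ℕ → Fm
  | and : Fm → Fm → Fm
  | or : Fm → Fm → Fm
  | imp : Fm → Fm → Fm

/-- ¬A abbreviates A → ⊥. -/
def Fm.neg (A : Fm) : Fm := Fm.imp A Fm.bot

/-- ¬¬A. -/
def Fm.dneg (A : Fm) : Fm := (Fm.imp A Fm.bot).imp Fm.bot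

/-- A strict finitistic model: a rooted tree (a partial order with minimum whose
sets of predecessors are linearly ordered), finitely branching, all of whose
branches (chains) are of at most countable length, with an upward-closed valuation
satisfying the finite verification condition and the atomic prevalence condition. -/
structure SFModel where
  K : Type
  le : K → K → Prop
  le_refl : ∀ k, le k k
  le_antisymm : ∀ k l, le k l → le l k → k = l
  le_trans : ∀ k l m, le k l → le l m → le k m
  root : K
  root_le : ∀ k, le root k
  pred_linear : ∀ k l m, le l k → le m k → le l m ∨ le m l
  finitely_branching :
    ∀ k, {l | le k l ∧ k ≠ l ∧ ∀ m, le k m → le m l → m = k ∨ m = l}.Finite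
  branches_countable :
    ∀ C : Set K, (∀ x ∈ C, ∀ y ∈ C, le x y ∨ le y x) → C.Countable
  val : ℕ → Set K
  val_up : ∀ p k l, le k l → k ∈ val p → l ∈ val p
  fin_verif : ∀ k, {p | k ∈ val p}.Finite
  atomic_prev : ∀ p, (∃ k, k ∈ val p) → ∀ l, ∃ l', le l l' ∧ l' ∈ val p

/-- Strict finitistic forcing at a node of a strict finitistic model. -/
def Force (W : SFModel) : W.K → Fm → Prop
  | _, Fm.bot => False
  | k, Fm.var p => k ∈ W.val p
  | k, Fm.and A B => Force W k A ∧ Force W k B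
  | k, Fm.or A B => Force W k A ∨ Force W k B
  | k, Fm.imp A B =>
      ∀ k', W.le k k' → Force W k' A → ∃ k'', W.le k' k'' ∧ Force W k'' B

/-- A is valid in W: every node forces A. -/
def Valid (W : SFModel) (A : Fm) : Prop := ∀ k, Force W k A

/-- A is assertible in W: some node forces A. -/
def Assertible (W : SFModel) (A : Fm) : Prop := ∃ k, Force W k A

/-- A is prevalent in W: above every node some node forces A. -/
def Prevalent (W : SFModel) (A : Fm) : Prop := ∀ k, ∃ k', W.le k k' ∧ Force W k' A

theorem force_mono (W : SFModel) (A : Fm) :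
    ∀ k l, W.le k l → Force W k A → Force W l A := by
  induction A with
  | bot => intro k l _ h; exact h
  | var p => intro k l hkl h; exact W.val_up p k l hkl h
  | and A B ihA ihB => intro k l hkl h; exact ⟨ihA k l hkl h.1, ihB k l hkl h.2⟩
  | or A B ihA ihB =>
      intro k l hkl h
      cases h with
      | inl h => exact Or.inl (ihA k l hkl h)
      | inr h => exact Or.inr (ihB k l hkl h)
  | imp A B ihA ihB =>
      intro k l hkl h k' hk' hA
      exact h k' (W.le_trans _ _ _ hkl hk') hA

/-- the full prevalence property: in every strict finitistic model,
every assertible formula is prevalent. -/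
theorem full_prevalence (W : SFModel) (A : Fm) :
    Assertible W A → Prevalent W A := by
  induction A with
  | bot => rintro ⟨k, h⟩; exact absurd h id
  | var p => rintro ⟨k, h⟩ l; exact W.atomic_prev p ⟨k, h⟩ l
  | and A B ihA ihB =>
      rintro ⟨k, hA, hB⟩ l
      obtain ⟨l1, hl1, hl1A⟩ := ihA ⟨k, hA⟩ l
      obtain ⟨l2, hl2, hl2B⟩ := ihB ⟨k, hB⟩ l1
      exact ⟨l2, W.le_trans _ _ _ hl1 hl2, force_mono W A l1 l2 hl2 hl1A, hl2B⟩
  | or A B ihA ihB =>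
      rintro ⟨k, h⟩ l
      cases h with
      | inl h =>
          obtain ⟨l', hl', hA⟩ := ihA ⟨k, h⟩ l
          exact ⟨l', hl', Or.inl hA⟩
      | inr h =>
          obtain ⟨l', hl', hB⟩ := ihB ⟨k, h⟩ l
          exact ⟨l', hl', Or.inr hB⟩
  | imp A B ihA ihB =>
      rintro ⟨k, h⟩ l
      by_cases hB : Assertible W B
      · refine ⟨l, W.le_refl l, fun k' _ _ => ?_⟩
        exact ihB hB k'
      · refine ⟨l, W.le_refl l, fun k' _ hA => ?_⟩
        exfalso
        obtain ⟨m, hm, hmA⟩ := ihA ⟨k', hA⟩ k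
        obtain ⟨n, _, hnB⟩ := h m hm hmA
        exact hB ⟨n, hnB⟩
end

section
/- For every strict finitistic model W, every node k of W and every formula A: k forces ¬A if and only if no node of W forces A; consequently, ¬¬A is valid in W if and only if A is assertible in W. -/
/-- Forcing is monotone along ≤. -/
lemma Force.mono (W : SFModel) : ∀ (A : Fm) (k l : W.K), W.le k l →
    Force W k A → Force W l A := by
  intro A
  induction A with
  | bot => intro k l _ h; exact h.elim
  | var p => intro k l hkl h; exact W.val_up p k l hkl h
  | and A B ihA ihB => intro k l hkl h; exact ⟨ihA k l hkl h.1, ihB k l hkl h.2⟩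
  | or A B ihA ihB =>
      intro k l hkl h
      cases h with
      | inl h => exact Or.inl (ihA k l hkl h)
      | inr h => exact Or.inr (ihB k l hkl h)
  | imp A B ihA ihB =>
      intro k l hkl h k' hk' hA
      exact h k' (W.le_trans _ _ _ hkl hk') hA

/-- Assertibility implies prevalence. -/
lemma assertible_prevalent (W : SFModel) : ∀ (A : Fm), Assertible W A → Prevalent W A := by
  intro A
  induction A with
  | bot => rintro ⟨l, hl⟩; exact hl.elim
  | var p =>
      rintro ⟨l, hl⟩ k
      exact W.atomic_prev p ⟨l, hl⟩ k
  | and A B ihA ihB =>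
      rintro ⟨l, hA, hB⟩ k
      obtain ⟨k1, hk1, hA1⟩ := ihA ⟨l, hA⟩ k
      obtain ⟨k2, hk2, hB2⟩ := ihB ⟨l, hB⟩ k1
      exact ⟨k2, W.le_trans _ _ _ hk1 hk2, Force.mono W A k1 k2 hk2 hA1, hB2⟩
  | or A B ihA ihB =>
      rintro ⟨l, hl⟩ k
      cases hl with
      | inl h => obtain ⟨k', h1, h2⟩ := ihA ⟨l, h⟩ k; exact ⟨k', h1, Or.inl h2⟩
      | inr h => obtain ⟨k', h1, h2⟩ := ihB ⟨l, h⟩ k; exact ⟨k', h1, Or.inr h2⟩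
  | imp A B ihA ihB =>
      rintro ⟨l, hl⟩ k
      refine ⟨k, W.le_refl k, ?_⟩
      intro k' _ hA
      -- A is assertible, so above l there is a node forcing A
      obtain ⟨l', hll', hAl'⟩ := ihA ⟨k', hA⟩ l
      obtain ⟨l'', _, hBl''⟩ := hl l' hll' hAl'
      exact ihB ⟨l'', hBl''⟩ k'

/-- a node forces ¬A iff no node forces A; consequently ¬¬A is valid
iff A is assertible. -/
theorem neg_global (W : SFModel) (A : Fm) :
    (∀ k, Force W k (Fm.neg A) ↔ ¬ ∃ l, Force W l A) ∧
    (Valid W (Fm.neg (Fm.neg A)) ↔ Assertible W A) := by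
  have main : ∀ k, Force W k (Fm.neg A) ↔ ¬ ∃ l, Force W l A := by
    intro k
    constructor
    · rintro hk ⟨l, hl⟩
      obtain ⟨k', hkk', hAk'⟩ := assertible_prevalent W A ⟨l, hl⟩ k
      obtain ⟨k'', _, hbot⟩ := hk k' hkk' hAk'
      exact hbot
    · intro h k' _ hA
      exact absurd ⟨k', hA⟩ h
  refine ⟨main, ?_, ?_⟩
  · intro hv
    by_contra hna
    have hroot := hv W.root
    have : Force W W.root (Fm.neg A) := (main W.root).mpr hna
    obtain ⟨k'', _, hbot⟩ := hroot W.root (W.le_refl _) this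
    exact hbot
  · intro ha k k' _ hneg
    exact absurd ha ((main k').mp hneg)
end

section
/- There exist a strict finitistic model W and a formula A such that A ∨ ¬A is not valid in W; moreover, there exist a strict finitistic model W and formulas A, B such that B → A and B are both valid in W but A is not valid in W (failure of the law of excluded middle and of Modus Ponens for strict finitistic validity). -/
/-- The linear model ℕ with variable 0 true exactly from node 1 on. -/
def natModel : SFModel where
  K := ℕ
  le := (· ≤ ·)
  le_refl := fun k => le_refl k
  le_antisymm := fun _ _ h h' => le_antisymm h h'
  le_trans := fun _ _ _ h h' => le_trans h h'
  root := 0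
  root_le := fun k => Nat.zero_le k
  pred_linear := fun _ l m _ _ => le_total l m
  finitely_branching := by
    intro k
    apply Set.Finite.subset (Set.finite_singleton (k + 1))
    rintro l ⟨hkl, hne, hmax⟩
    have h1 : k + 1 ≤ l := Nat.lt_of_le_of_ne hkl hne
    rcases hmax (k + 1) (Nat.le_succ k) h1 with h | h
    · exact absurd h (Nat.succ_ne_self k)
    · exact Set.mem_singleton_iff.mpr h.symm
  branches_countable := fun C _ => C.to_countable
  val := fun p => if p = 0 then {n | 1 ≤ n} else ∅
  val_up := by
    intro p k l hkl hk
    by_cases hp : p = 0 <;> simp [hp] at hk ⊢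
    · exact le_trans hk hkl
  fin_verif := by
    intro k
    apply Set.Finite.subset (Set.finite_singleton 0)
    intro p hp
    by_cases h : p = 0
    · exact h
    · simp [Set.mem_setOf_eq, h] at hp
  atomic_prev := by
    intro p hp l
    by_cases h : p = 0
    · exact ⟨max l 1, le_max_left _ _, by simp [h]⟩
    · obtain ⟨k, hk⟩ := hp
      simp [h] at hk

/-- failure of the law of excluded middle and of Modus Ponens for
strict finitistic validity. -/
theorem lem_and_mp_fail :
    (∃ (W : SFModel) (A : Fm), ¬ Valid W (Fm.or A (Fm.neg A))) ∧
    (∃ (W : SFModel) (A B : Fm),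
      Valid W (Fm.imp B A) ∧ Valid W B ∧ ¬ Valid W A) := by
  let z : natModel.K := (0 : ℕ)
  let o : natModel.K := (1 : ℕ)
  have hnot : ¬ Force natModel z (Fm.var 0) := by
    simp [Force, natModel, z]; exact Nat.not_succ_le_zero 0
  constructor
  · refine ⟨natModel, Fm.var 0, fun h => ?_⟩
    rcases h z with h0 | h0
    · exact hnot h0
    · obtain ⟨_, _, hff⟩ := h0 o (Nat.zero_le 1) (by simp [Force, natModel, o]; exact le_refl 1)
      exact hff
  · refine ⟨natModel, Fm.var 0, Fm.imp Fm.bot Fm.bot, ?_, ?_, ?_⟩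
    · intro k k' _ _
      exact ⟨(max k' 1 : ℕ), le_max_left _ _, by simp [Force, natModel]; exact le_max_right (α := ℕ) k' 1⟩
    · intro k k' _ h
      exact absurd h id
    · intro h
      exact hnot (h z)
end

section
/- For every ST formula S, the sequent ¬¬S ⊢ S is derivable in the sequent calculus SF. -/
/-- STFm formulas: ⊥ is STFm; A → B is STFm for arbitrary formulas A, B; and STFm formulas
are closed under ∧ and ∨. -/
inductive STFm : Fm → Prop
  | bot : STFm Fm.bot
  | imp (A B : Fm) : STFm (Fm.imp A B)
  | and {A B : Fm} : STFm A → STFm B → STFm (Fm.and A B)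
  | or {A B : Fm} : STFm A → STFm B → STFm (Fm.or A B)

/-- The sequent calculus SF on sequents of finite sequences (lists) of formulas:
initial sequents ⊥ ⊢ and p ⊢ p, the structural rules of LK (weakening,
contraction, exchange and cut on both sides), and the logical rules of SF. -/
inductive SFDeriv : List Fm → List Fm → Prop
  | botL : SFDeriv [Fm.bot] []
  | ax (p : ℕ) : SFDeriv [Fm.var p] [Fm.var p]
  | wkL (A : Fm) (Γ Δ : List Fm) : SFDeriv Γ Δ → SFDeriv (A :: Γ) Δ
  | wkR (A : Fm) (Γ Δ : List Fm) : SFDeriv Γ Δ → SFDeriv Γ (Δ ++ [A])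
  | ctrL (A : Fm) (Γ Δ : List Fm) : SFDeriv (A :: A :: Γ) Δ → SFDeriv (A :: Γ) Δ
  | ctrR (A : Fm) (Γ Δ : List Fm) : SFDeriv Γ (Δ ++ [A, A]) → SFDeriv Γ (Δ ++ [A])
  | exch (Γ Γ' Δ Δ' : List Fm) :
      SFDeriv Γ Δ → Γ.Perm Γ' → Δ.Perm Δ' → SFDeriv Γ' Δ'
  | cut (A : Fm) (Γ Δ Pi Sg : List Fm) :
      SFDeriv Γ (Δ ++ [A]) → SFDeriv (A :: Pi) Sg → SFDeriv (Γ ++ Pi) (Δ ++ Sg)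
  | andL1 (A B : Fm) (Γ Δ : List Fm) :
      SFDeriv (A :: Γ) Δ → SFDeriv (Fm.and B A :: Γ) Δ
  | andL2 (A B : Fm) (Γ Δ : List Fm) :
      SFDeriv (A :: Γ) Δ → SFDeriv (Fm.and A B :: Γ) Δ
  | andR (A B : Fm) (Γ Δ : List Fm) :
      SFDeriv Γ (Δ ++ [A]) → SFDeriv Γ (Δ ++ [B]) → SFDeriv Γ (Δ ++ [Fm.and A B])
  | orL (A B : Fm) (Γ Δ : List Fm) :
      SFDeriv (A :: Γ) Δ → SFDeriv (B :: Γ) Δ → SFDeriv (Fm.or A B :: Γ) Δ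
  | orR1 (A B : Fm) (Γ Δ : List Fm) :
      SFDeriv Γ (Δ ++ [A]) → SFDeriv Γ (Δ ++ [Fm.or A B])
  | orR2 (A B : Fm) (Γ Δ : List Fm) :
      SFDeriv Γ (Δ ++ [A]) → SFDeriv Γ (Δ ++ [Fm.or B A])
  | impL (A B : Fm) (Γ Δ Pi Sg : List Fm) :
      SFDeriv Γ (Δ ++ [A]) → SFDeriv (B :: Pi) Sg →
      SFDeriv (Γ ++ Fm.imp A B :: Pi) (Δ ++ Sg.map Fm.dneg)
  | impR (A B : Fm) (Γ Δ : List Fm) :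
      SFDeriv (Γ ++ [A]) (Fm.dneg B :: Δ) →
      SFDeriv Γ (Fm.imp A B :: Δ.map Fm.dneg)

namespace SFAux

open Fm SFDeriv

theorem exL {Γ Γ' Δ : List Fm} (h : SFDeriv Γ Δ) (p : Γ.Perm Γ') : SFDeriv Γ' Δ :=
  SFDeriv.exch _ _ _ _ h p (List.Perm.refl _)

theorem exR {Γ Δ Δ' : List Fm} (h : SFDeriv Γ Δ) (p : Δ.Perm Δ') : SFDeriv Γ Δ' :=
  SFDeriv.exch _ _ _ _ h (List.Perm.refl _) p

theorem p2 (a b : Fm) (l : List Fm) : (a :: b :: l).Perm (b :: a :: l) :=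
  List.Perm.swap b a l

theorem rot (a b c : Fm) (l : List Fm) : (a :: b :: c :: l).Perm (b :: c :: a :: l) :=
  (List.Perm.swap b a (c :: l)).trans (List.Perm.cons b (List.Perm.swap c a l))

/-- identity sequents A ⊢ A for all formulas -/
theorem ident : ∀ A : Fm, SFDeriv [A] [A] := by
  intro A
  induction A with
  | bot => exact SFDeriv.wkR Fm.bot [Fm.bot] [] SFDeriv.botL
  | var p => exact SFDeriv.ax p
  | and A B ihA ihB =>
    exact SFDeriv.andR A B [Fm.and A B] []
      (SFDeriv.andL2 A B [] [A] ihA) (SFDeriv.andL1 B A [] [B] ihB)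
  | or A B ihA ihB =>
    exact SFDeriv.orL A B [] [Fm.or A B]
      (SFDeriv.orR1 A B [A] [] ihA) (SFDeriv.orR2 B A [B] [] ihB)
  | imp A B ihA ihB =>
    have h1 : SFDeriv [A, Fm.imp A B] [Fm.dneg B] :=
      SFDeriv.impL A B [A] [] [] [B] ihA ihB
    have h2 : SFDeriv [Fm.imp A B, A] [Fm.dneg B] := exL h1 (p2 A (Fm.imp A B) [])
    exact SFDeriv.impR A B [Fm.imp A B] [] h2

/-- ⊥ proves anything -/
theorem botAll : ∀ Δ : List Fm, SFDeriv [Fm.bot] Δ := by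
  intro Δ
  induction Δ using List.reverseRecOn with
  | nil => exact SFDeriv.botL
  | append_singleton l a ih => exact SFDeriv.wkR a [Fm.bot] l ih

/-- contraposition -/
theorem contra {C D : Fm} (h : SFDeriv [C] [D]) : SFDeriv [Fm.neg D] [Fm.neg C] := by
  have h1 : SFDeriv [C, Fm.neg D] [Fm.dneg Fm.bot] :=
    SFDeriv.impL D Fm.bot [C] [] [] [Fm.bot] h (botAll [Fm.bot])
  have h2 : SFDeriv [Fm.neg D, C] [Fm.dneg Fm.bot] := exL h1 (p2 C (Fm.neg D) [])
  exact SFDeriv.impR C Fm.bot [Fm.neg D] [] h2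

theorem dneg_mono {C D : Fm} (h : SFDeriv [C] [D]) :
    SFDeriv [Fm.dneg C] [Fm.dneg D] := contra (contra h)

/-- ⊢ ¬¬X, ¬X -/
theorem nn_pair (X : Fm) : SFDeriv [] [Fm.dneg X, Fm.neg X] := by
  have h1 : SFDeriv [X] [X, Fm.dneg Fm.bot] :=
    SFDeriv.wkR (Fm.dneg Fm.bot) [X] [X] (ident X)
  have h2 : SFDeriv [X] [Fm.dneg Fm.bot, X] := exR h1 (p2 X (Fm.dneg Fm.bot) [])
  have h3 : SFDeriv [] [Fm.neg X, Fm.dneg X] := SFDeriv.impR X Fm.bot [] [X] h2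
  exact exR h3 (p2 (Fm.neg X) (Fm.dneg X) [])

/-- easy cut: Γ ⊢ X and X, Π ⊢ Σ gives Γ ++ Π ⊢ Σ -/
theorem cut1 {X : Fm} {Γ Pi Sg : List Fm} (h1 : SFDeriv Γ [X])
    (h2 : SFDeriv (X :: Pi) Sg) : SFDeriv (Γ ++ Pi) Sg :=
  SFDeriv.cut X Γ [] Pi Sg h1 h2

end SFAux

/-- for every STFm formula S, the sequent ¬¬S ⊢ S is derivable
in SF. -/

theorem st_dneg_elim (S : Fm) (hS : STFm S) : SFDeriv [Fm.dneg S] [S] := by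
  induction hS with
  | bot =>
    have h1 : SFDeriv [Fm.bot] [Fm.dneg Fm.bot] := SFAux.botAll _
    have h2 : SFDeriv [] [Fm.imp Fm.bot Fm.bot] := SFDeriv.impR Fm.bot Fm.bot [] [] h1
    have h3 : SFDeriv [Fm.dneg Fm.bot] [] :=
      SFDeriv.impL (Fm.imp Fm.bot Fm.bot) Fm.bot [] [] [] [] h2 SFDeriv.botL
    exact SFDeriv.wkR Fm.bot [Fm.dneg Fm.bot] [] h3
  | imp A B =>
    have s1 : SFDeriv [B, Fm.neg B] [Fm.bot] := by
      have := SFDeriv.impL B Fm.bot [B] [] [] [] (SFAux.ident B) SFDeriv.botL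
      exact SFDeriv.wkR Fm.bot [B, Fm.neg B] [] this
    have s2 : SFDeriv [A, Fm.imp A B, Fm.neg B] [Fm.dneg Fm.bot] :=
      SFDeriv.impL A B [A] [] [Fm.neg B] [Fm.bot] (SFAux.ident A) s1
    have s2' : SFDeriv [A, Fm.neg B, Fm.imp A B] [Fm.dneg Fm.bot] :=
      SFAux.exL s2 (List.Perm.cons A (SFAux.p2 (Fm.imp A B) (Fm.neg B) []))
    have s3 : SFDeriv [A, Fm.neg B] [Fm.neg (Fm.imp A B)] :=
      SFDeriv.impR (Fm.imp A B) Fm.bot [A, Fm.neg B] [] s2'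
    have s4 : SFDeriv [A, Fm.neg B, Fm.dneg (Fm.imp A B)] [Fm.dneg Fm.bot] :=
      SFDeriv.impL (Fm.neg (Fm.imp A B)) Fm.bot [A, Fm.neg B] [] [] [Fm.bot] s3
        (SFAux.botAll [Fm.bot])
    have s4' : SFDeriv [Fm.dneg (Fm.imp A B), A, Fm.neg B] [Fm.dneg Fm.bot] :=
      SFAux.exL s4 (SFAux.rot (Fm.dneg (Fm.imp A B)) A (Fm.neg B) []).symm
    have s5 : SFDeriv [Fm.dneg (Fm.imp A B), A] [Fm.dneg B] :=
      SFDeriv.impR (Fm.neg B) Fm.bot [Fm.dneg (Fm.imp A B), A] [] s4'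
    exact SFDeriv.impR A B [Fm.dneg (Fm.imp A B)] [] s5
  | @and A B _ _ ihA ihB =>
    have a1 : SFDeriv [Fm.and A B] [A] := SFDeriv.andL2 A B [] [A] (SFAux.ident A)
    have b1 : SFDeriv [Fm.and A B] [B] := SFDeriv.andL1 B A [] [B] (SFAux.ident B)
    have a3 : SFDeriv [Fm.dneg (Fm.and A B)] [A] := SFAux.cut1 (SFAux.dneg_mono a1) ihA
    have b3 : SFDeriv [Fm.dneg (Fm.and A B)] [B] := SFAux.cut1 (SFAux.dneg_mono b1) ihB
    exact SFDeriv.andR A B [Fm.dneg (Fm.and A B)] [] a3 b3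
  | @or A B _ _ ihA ihB =>
    have o1 : SFDeriv [Fm.or A B] [A, B] := by
      refine SFDeriv.orL A B [] [A, B] (SFDeriv.wkR B [A] [A] (SFAux.ident A)) ?_
      exact SFAux.exR (SFDeriv.wkR A [B] [B] (SFAux.ident B)) (SFAux.p2 B A [])
    have o2 : SFDeriv [Fm.or A B, Fm.neg B] [A] :=
      SFDeriv.impL B Fm.bot [Fm.or A B] [A] [] [] o1 SFDeriv.botL
    have o3 : SFDeriv [Fm.or A B, Fm.neg B, Fm.neg A] [] :=
      SFDeriv.impL A Fm.bot [Fm.or A B, Fm.neg B] [] [] [] o2 SFDeriv.botL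
    have o4 : SFDeriv [Fm.or A B, Fm.neg B, Fm.neg A] [Fm.dneg Fm.bot] :=
      SFDeriv.wkR (Fm.dneg Fm.bot) _ [] o3
    have o4' : SFDeriv [Fm.neg B, Fm.neg A, Fm.or A B] [Fm.dneg Fm.bot] :=
      SFAux.exL o4 (SFAux.rot (Fm.or A B) (Fm.neg B) (Fm.neg A) [])
    have o5 : SFDeriv [Fm.neg B, Fm.neg A] [Fm.neg (Fm.or A B)] :=
      SFDeriv.impR (Fm.or A B) Fm.bot [Fm.neg B, Fm.neg A] [] o4'
    have o6 : SFDeriv [Fm.neg B, Fm.neg A, Fm.dneg (Fm.or A B)] [Fm.dneg Fm.bot] :=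
      SFDeriv.impL (Fm.neg (Fm.or A B)) Fm.bot [Fm.neg B, Fm.neg A] [] [] [Fm.bot] o5
        (SFAux.botAll [Fm.bot])
    have o6' : SFDeriv [Fm.neg A, Fm.dneg (Fm.or A B), Fm.neg B] [Fm.dneg Fm.bot] :=
      SFAux.exL o6 (SFAux.rot (Fm.neg B) (Fm.neg A) (Fm.dneg (Fm.or A B)) [])
    have o7 : SFDeriv [Fm.neg A, Fm.dneg (Fm.or A B)] [Fm.dneg B] :=
      SFDeriv.impR (Fm.neg B) Fm.bot [Fm.neg A, Fm.dneg (Fm.or A B)] [] o6'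
    have o8 : SFDeriv [Fm.neg A, Fm.dneg (Fm.or A B)] [B] := SFAux.cut1 o7 ihB
    have o9 : SFDeriv [Fm.neg A, Fm.dneg (Fm.or A B)] [Fm.or A B] :=
      SFDeriv.orR2 B A [Fm.neg A, Fm.dneg (Fm.or A B)] [] o8
    have o10 : SFDeriv [] [Fm.neg A, A] := by
      have h := SFAux.exR (SFAux.nn_pair A) (SFAux.p2 (Fm.dneg A) (Fm.neg A) [])
      exact SFDeriv.cut (Fm.dneg A) [] [Fm.neg A] [] [A] h ihA
    have o10' : SFDeriv [] [A, Fm.neg A] := SFAux.exR o10 (SFAux.p2 (Fm.neg A) A [])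
    have o11 : SFDeriv [Fm.dneg (Fm.or A B)] [A, Fm.or A B] :=
      SFDeriv.cut (Fm.neg A) [] [A] [Fm.dneg (Fm.or A B)] [Fm.or A B] o10' o9
    have o11' : SFDeriv [Fm.dneg (Fm.or A B)] [Fm.or A B, A] :=
      SFAux.exR o11 (SFAux.p2 A (Fm.or A B) [])
    have o12 : SFDeriv [Fm.dneg (Fm.or A B)] [Fm.or A B, Fm.or A B] :=
      SFDeriv.orR1 A B [Fm.dneg (Fm.or A B)] [Fm.or A B] o11'
    exact SFDeriv.ctrR (Fm.or A B) [Fm.dneg (Fm.or A B)] [] o12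
end

section
/- Extension lemma: let Γ, Δ be finite sets of formulas with Γ ⊬_SF Δ. Then there exists a set Γ* with Γ ⊆ Γ* ⊆ Fm(Γ ∪ Δ) such that Γ* is a prime theory with respect to Fm(Γ ∪ Δ) and the pair ⟨Γ*, Δ⟩ is consistent. -/
/-- The set of variables occurring in a formula. -/
def Fm.vars : Fm → Finset ℕ
  | Fm.bot => ∅
  | Fm.var p => {p}
  | Fm.and A B => A.vars ∪ B.vars
  | Fm.or A B => A.vars ∪ B.vars
  | Fm.imp A B => A.vars ∪ B.vars

/-- The set of variables occurring in members of a set of formulas. -/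
def varsOf (S : Set Fm) : Set ℕ := ⋃ A ∈ S, (Fm.vars A : Set ℕ)

/-- Fm(Ψ)-style set: all formulas built only from variables in V. -/
def FmOver (V : Set ℕ) : Set Fm := {A | ∀ p ∈ Fm.vars A, p ∈ V}

/-- Some finite sequence from Γ derives, in SF, some finite sequence from Δ. -/
def DerivFrom (Γ Δ : Set Fm) : Prop :=
  ∃ L M : List Fm, (∀ A ∈ L, A ∈ Γ) ∧ (∀ B ∈ M, B ∈ Δ) ∧ SFDeriv L M

/-- Γ is a prime theory with respect to Ψ (with Γ ⊆ Ψ): for all A, B ∈ Ψ,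
A ∨ B ∈ Γ implies A ∈ Γ or B ∈ Γ, and if some finite sequence from Γ derives A
in SF then A ∈ Γ. -/
def PrimeTheory (Γ Ψ : Set Fm) : Prop :=
  Γ ⊆ Ψ ∧
  (∀ A ∈ Ψ, ∀ B ∈ Ψ, Fm.or A B ∈ Γ → A ∈ Γ ∨ B ∈ Γ) ∧
  (∀ A ∈ Ψ, (∃ L : List Fm, (∀ C ∈ L, C ∈ Γ) ∧ SFDeriv L [A]) → A ∈ Γ)

/- ===================== auxiliary material ===================== -/

deriving instance DecidableEq for Fm

/-- An injective coding of formulas into ℕ. -/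
def Fm.code : Fm → ℕ
  | Fm.bot => Nat.pair 0 0
  | Fm.var p => Nat.pair 1 p
  | Fm.and A B => Nat.pair 2 (Nat.pair A.code B.code)
  | Fm.or A B => Nat.pair 3 (Nat.pair A.code B.code)
  | Fm.imp A B => Nat.pair 4 (Nat.pair A.code B.code)

theorem Fm.code_inj : Function.Injective Fm.code := by
  intro A
  induction A with
  | bot => intro B hB; cases B <;> simp [Fm.code, Nat.pair_eq_pair] at hB ⊢
  | var p => intro B hB; cases B <;> simp [Fm.code, Nat.pair_eq_pair] at hB ⊢; exact hB
  | and a b iha ihb =>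
      intro B hB; cases B <;> simp [Fm.code, Nat.pair_eq_pair] at hB ⊢
      exact ⟨iha hB.1, ihb hB.2⟩
  | or a b iha ihb =>
      intro B hB; cases B <;> simp [Fm.code, Nat.pair_eq_pair] at hB ⊢
      exact ⟨iha hB.1, ihb hB.2⟩
  | imp a b iha ihb =>
      intro B hB; cases B <;> simp [Fm.code, Nat.pair_eq_pair] at hB ⊢
      exact ⟨iha hB.1, ihb hB.2⟩

instance : Countable Fm := ⟨⟨Fm.code, Fm.code_inj⟩⟩
instance : Nonempty Fm := ⟨Fm.bot⟩

theorem exch' {L M L' M' : List Fm} (h : SFDeriv L M) (p : L.Perm L') (q : M.Perm M') :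
    SFDeriv L' M' := SFDeriv.exch _ _ _ _ h p q

theorem wkL_list (K : List Fm) {L M : List Fm} (h : SFDeriv L M) : SFDeriv (K ++ L) M := by
  induction K with
  | nil => exact h
  | cons a K ih => exact SFDeriv.wkL a _ _ ih

theorem wkR_list (K : List Fm) {L M : List Fm} (h : SFDeriv L M) : SFDeriv L (M ++ K) := by
  induction K generalizing M with
  | nil => simpa using h
  | cons a K ih =>
      have h1 := SFDeriv.wkR a L M h
      have h2 := ih h1
      simpa [List.append_assoc] using h2

theorem ctr_memL {a : Fm} {K M : List Fm} (ha : a ∈ K) (h : SFDeriv (a :: K) M) :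
    SFDeriv K M := by
  obtain ⟨s, t, rfl⟩ := List.append_of_mem ha
  have p1 : (a :: (s ++ a :: t)).Perm (a :: a :: (s ++ t)) := List.Perm.cons a List.perm_middle
  have h2 := exch' h p1 (List.Perm.refl M)
  have h3 := SFDeriv.ctrL a (s ++ t) M h2
  exact exch' h3 List.perm_middle.symm (List.Perm.refl M)

theorem ctr_memR {a : Fm} {K L : List Fm} (ha : a ∈ K) (h : SFDeriv L (K ++ [a])) :
    SFDeriv L K := by
  obtain ⟨s, t, rfl⟩ := List.append_of_mem ha
  have p1 : ((s ++ a :: t) ++ [a]).Perm ((s ++ t) ++ [a, a]) := by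
    have h1 : ((s ++ a :: t) ++ [a]).Perm (a :: ((s ++ t) ++ [a])) :=
      List.perm_middle.append_right [a]
    have h2 : (a :: ((s ++ t) ++ [a])).Perm (((s ++ t) ++ [a]) ++ [a]) :=
      (List.perm_append_singleton a _).symm
    have h3 := h1.trans h2
    simpa [List.append_assoc] using h3
  have h2 := exch' h (List.Perm.refl L) p1
  have h3 := SFDeriv.ctrR a L (s ++ t) h2
  have p2 : ((s ++ t) ++ [a]).Perm (s ++ a :: t) :=
    (List.perm_append_singleton a (s ++ t)).trans List.perm_middle.symm
  exact exch' h3 (List.Perm.refl L) p2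

theorem ctr_absorbL {K L M : List Fm} (hsub : ∀ a ∈ L, a ∈ K) (h : SFDeriv (K ++ L) M) :
    SFDeriv K M := by
  induction L with
  | nil => simpa using h
  | cons a L ih =>
      have p : (K ++ a :: L).Perm (a :: (K ++ L)) := List.perm_middle
      have h2 := exch' h p (List.Perm.refl M)
      have h3 := ctr_memL (List.mem_append.mpr (Or.inl (hsub a (by simp)))) h2
      exact ih (fun b hb => hsub b (by simp [hb])) h3

theorem ctr_absorbR {K L M : List Fm} (hsub : ∀ b ∈ M, b ∈ K) (h : SFDeriv L (K ++ M)) :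
    SFDeriv L K := by
  induction M with
  | nil => simpa using h
  | cons b M ih =>
      have p : (K ++ b :: M).Perm ((K ++ M) ++ [b]) := by
        have h1 : (K ++ b :: M).Perm (b :: (K ++ M)) := List.perm_middle
        exact h1.trans (List.perm_append_singleton b _).symm
      have h2 := exch' h (List.Perm.refl L) p
      have h3 := ctr_memR (List.mem_append.mpr (Or.inl (hsub b (by simp)))) h2
      exact ih (fun c hc => hsub c (by simp [hc])) h3

/-- SF derivability depends only on the sets of formulas involved (upwards). -/
theorem SF_mono {L M L' M' : List Fm} (h : SFDeriv L M)
    (hL : ∀ a ∈ L, a ∈ L') (hM : ∀ b ∈ M, b ∈ M') : SFDeriv L' M' := by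
  have h1 : SFDeriv (L' ++ L) (M ++ M') := wkR_list M' (wkL_list L' h)
  have h2 : SFDeriv (L' ++ L) (M' ++ M) := exch' h1 (List.Perm.refl _) List.perm_append_comm
  exact ctr_absorbL hL (ctr_absorbR hM h2)

open Classical in
/-- The Lindenbaum chain. -/
noncomputable def SFchain (Γ0 Ψ Δs : Set Fm) (e : ℕ → Fm) : ℕ → Set Fm
  | 0 => Γ0
  | n + 1 =>
      if e n ∈ Ψ ∧ ¬ DerivFrom (insert (e n) (SFchain Γ0 Ψ Δs e n)) Δs
      then insert (e n) (SFchain Γ0 Ψ Δs e n)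
      else SFchain Γ0 Ψ Δs e n

theorem SFchain_succ (Γ0 Ψ Δs : Set Fm) (e : ℕ → Fm) (n : ℕ) :
    SFchain Γ0 Ψ Δs e n ⊆ SFchain Γ0 Ψ Δs e (n + 1) := by
  simp only [SFchain]
  split_ifs with hc
  · exact Set.subset_insert _ _
  · exact subset_rfl

theorem SFchain_cons {Γ0 Ψ Δs : Set Fm} {e : ℕ → Fm} (h0 : ¬ DerivFrom Γ0 Δs) :
    ∀ n, ¬ DerivFrom (SFchain Γ0 Ψ Δs e n) Δs
  | 0 => h0
  | n + 1 => by
      simp only [SFchain]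
      split_ifs with hc
      · exact hc.2
      · exact SFchain_cons h0 n

theorem SFchain_subPsi {Γ0 Ψ Δs : Set Fm} {e : ℕ → Fm} (h0 : Γ0 ⊆ Ψ) :
    ∀ n, SFchain Γ0 Ψ Δs e n ⊆ Ψ
  | 0 => h0
  | n + 1 => by
      simp only [SFchain]
      split_ifs with hc
      · exact Set.insert_subset hc.1 (SFchain_subPsi h0 n)
      · exact SFchain_subPsi h0 n

theorem exists_stage (c : ℕ → Set Fm) (mono : ∀ n, c n ⊆ c (n + 1)) :
    ∀ (L : List Fm), (∀ a ∈ L, ∃ n, a ∈ c n) → ∃ N, ∀ a ∈ L, a ∈ c N := by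
  have monole : ∀ {m n}, m ≤ n → c m ⊆ c n := by
    intro m n hmn
    induction hmn with
    | refl => exact subset_rfl
    | step _ ih => exact fun x hx => mono _ (ih hx)
  intro L
  induction L with
  | nil => intro _; exact ⟨0, by simp⟩
  | cons a L ih =>
      intro hmem
      obtain ⟨N, hN⟩ := ih (fun b hb => hmem b (by simp [hb]))
      obtain ⟨n, hn⟩ := hmem a (by simp)
      refine ⟨max n N, ?_⟩
      intro b hb
      rcases List.mem_cons.mp hb with rfl | hb
      · exact monole (le_max_left _ _) hn
      · exact monole (le_max_right _ _) (hN b hb)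

/-- extension lemma: if the finite sets Γ, Δ satisfy Γ ⊬_SF Δ, then
Γ extends to a prime theory Γ* with respect to Fm(Γ ∪ Δ) such that ⟨Γ*, Δ⟩ is
consistent. -/
theorem extension_lemma (Γ Δ : Finset Fm)
    (h : ∀ L M : List Fm, (∀ A, A ∈ L ↔ A ∈ Γ) → (∀ B, B ∈ M ↔ B ∈ Δ) →
      ¬ SFDeriv L M) :
    ∃ Γs : Set Fm,
      (Γ : Set Fm) ⊆ Γs ∧
      Γs ⊆ FmOver (varsOf ((Γ : Set Fm) ∪ (Δ : Set Fm))) ∧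
      PrimeTheory Γs (FmOver (varsOf ((Γ : Set Fm) ∪ (Δ : Set Fm)))) ∧
      ¬ DerivFrom Γs (Δ : Set Fm) := by
  classical
  obtain ⟨e, he⟩ := exists_surjective_nat Fm
  set Ψ : Set Fm := FmOver (varsOf ((Γ : Set Fm) ∪ (Δ : Set Fm))) with hΨdef
  set Δs : Set Fm := (Δ : Set Fm) with hΔdef
  -- base consistency
  have h0 : ¬ DerivFrom (Γ : Set Fm) Δs := by
    rintro ⟨L, M, hL, hM, hd⟩
    have hd' : SFDeriv Γ.toList Δ.toList :=
      SF_mono hd (fun a ha => Finset.mem_toList.mpr (hL a ha))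
        (fun b hb => Finset.mem_toList.mpr (hM b hb))
    exact h Γ.toList Δ.toList (fun A => Finset.mem_toList) (fun B => Finset.mem_toList) hd'
  have hΓΨ : (Γ : Set Fm) ⊆ Ψ := by
    intro A hA p hp
    exact Set.mem_biUnion (Set.mem_union_left _ hA) hp
  set c : ℕ → Set Fm := SFchain (Γ : Set Fm) Ψ Δs e with hcdef
  have cmono : ∀ n, c n ⊆ c (n + 1) := fun n => SFchain_succ _ _ _ _ n
  have ccons : ∀ n, ¬ DerivFrom (c n) Δs := fun n => SFchain_cons h0 n
  have csub : ∀ n, c n ⊆ Ψ := fun n => SFchain_subPsi hΓΨ n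
  set Γs : Set Fm := ⋃ n, c n with hΓsdef
  have hΓΓs : (Γ : Set Fm) ⊆ Γs := by
    intro a ha
    exact Set.mem_iUnion.mpr ⟨0, ha⟩
  have hΓsΨ : Γs ⊆ Ψ := Set.iUnion_subset csub
  have hconsU : ¬ DerivFrom Γs Δs := by
    rintro ⟨L, M, hL, hM, hd⟩
    obtain ⟨N, hN⟩ := exists_stage c cmono L (fun a ha => Set.mem_iUnion.mp (hL a ha))
    exact ccons N ⟨L, M, hN, hM, hd⟩
  -- rejected formulas give inconsistency
  have hreject : ∀ A ∈ Ψ, A ∉ Γs → ∃ k, DerivFrom (insert A (c k)) Δs := by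
    intro A hAΨ hA
    obtain ⟨k, rfl⟩ := he A
    refine ⟨k, ?_⟩
    by_contra hcon
    apply hA
    apply Set.mem_iUnion.mpr ⟨k + 1, ?_⟩
    show e k ∈ SFchain (Γ : Set Fm) Ψ Δs e (k + 1)
    simp only [SFchain]
    rw [if_pos ⟨hAΨ, hcon⟩]
    exact Set.mem_insert _ _
  -- extracting a derivation with A explicitly in front
  have extract : ∀ (A : Fm) (G : Set Fm), DerivFrom (insert A G) Δs →
      ∃ K M : List Fm, (∀ b ∈ K, b ∈ G) ∧ (∀ b ∈ M, b ∈ Δs) ∧ SFDeriv (A :: K) M := by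
    rintro A G ⟨L, M, hL, hM, hd⟩
    refine ⟨L.filter (fun x => x ≠ A), M, ?_, hM, ?_⟩
    · intro b hb
      have hb' := List.mem_filter.mp hb
      have hbL := hb'.1
      have hbne : b ≠ A := by simpa using hb'.2
      rcases Set.mem_insert_iff.mp (hL b hbL) with h1 | h1
      · exact absurd h1 hbne
      · exact h1
    · refine SF_mono hd ?_ (fun b hb => hb)
      intro b hb
      by_cases hba : b = A
      · simp [hba]
      · simp [List.mem_filter, hb, hba]
  refine ⟨Γs, hΓΓs, hΓsΨ, ⟨hΓsΨ, ?_, ?_⟩, hconsU⟩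
  · -- primeness
    intro A hAΨ B hBΨ hor
    by_contra hnot
    push_neg at hnot
    obtain ⟨j, hjd⟩ := hreject A hAΨ hnot.1
    obtain ⟨k, hkd⟩ := hreject B hBΨ hnot.2
    obtain ⟨K₁, M₁, hK₁, hM₁, hd₁⟩ := extract A (c j) hjd
    obtain ⟨K₂, M₂, hK₂, hM₂, hd₂⟩ := extract B (c k) hkd
    have hd₁' : SFDeriv (A :: (K₁ ++ K₂)) (M₁ ++ M₂) := by
      refine SF_mono hd₁ ?_ ?_
      · intro b hb
        rcases List.mem_cons.mp hb with rfl | hb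
        · simp
        · simp [List.mem_append, hb]
      · intro b hb; simp [List.mem_append, hb]
    have hd₂' : SFDeriv (B :: (K₁ ++ K₂)) (M₁ ++ M₂) := by
      refine SF_mono hd₂ ?_ ?_
      · intro b hb
        rcases List.mem_cons.mp hb with rfl | hb
        · simp
        · simp [List.mem_append, hb]
      · intro b hb; simp [List.mem_append, hb]
    have hdor := SFDeriv.orL A B (K₁ ++ K₂) (M₁ ++ M₂) hd₁' hd₂'
    apply hconsU
    refine ⟨Fm.or A B :: (K₁ ++ K₂), M₁ ++ M₂, ?_, ?_, hdor⟩
    · intro b hb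
      rcases List.mem_cons.mp hb with rfl | hb
      · exact hor
      · rcases List.mem_append.mp hb with hb | hb
        · exact Set.mem_iUnion.mpr ⟨j, hK₁ b hb⟩
        · exact Set.mem_iUnion.mpr ⟨k, hK₂ b hb⟩
    · intro b hb
      rcases List.mem_append.mp hb with hb | hb
      · exact hM₁ b hb
      · exact hM₂ b hb
  · -- closure under derivability
    rintro A hAΨ ⟨L, hL, hd⟩
    by_contra hA
    obtain ⟨k, hkd⟩ := hreject A hAΨ hA
    obtain ⟨K, M, hK, hM, hd2⟩ := extract A (c k) hkd
    have hcut := SFDeriv.cut A L [] K M (by simpa using hd) hd2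
    apply hconsU
    refine ⟨L ++ K, M, ?_, hM, by simpa using hcut⟩
    intro b hb
    rcases List.mem_append.mp hb with hb | hb
    · exact hL b hb
    · exact Set.mem_iUnion.mpr ⟨k, hK b hb⟩
end

section
/- Truth lemma: let Γ, Δ be finite sets of formulas and Γ* a prime theory with respect to Fm(Γ ∪ Δ) such that ⟨Γ*, Δ⟩ is consistent. Define the two-node Kripke model W = ({k, k'}, ≤, v) with k < k', k ∈ v(p) iff p ∈ Γ*, and k' ∈ v(p) iff ¬¬p ∈ Γ*. Then W is a strict finitistic model and for every formula A ∈ Fm(Γ ∪ Δ): (i) ¬¬A ∈ Γ* iff k' forces A in W; and (ii) A ∈ Γ* iff k forces A in W. -/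
/-- The order of the two-node frame {r, k} with r < k, where `false` is the root r
and `true` is the top node k. -/
def le2 (x y : Bool) : Prop := x = y ∨ (x = false ∧ y = true)

/-- Strict finitistic forcing on the two-node frame, where the valuation is given
by `a p` (the root r = `false` forces p) and `b p` (the top k = `true` forces p). -/
def Force2 (a b : ℕ → Prop) : Bool → Fm → Prop
  | _, Fm.bot => False
  | false, Fm.var p => a p
  | true, Fm.var p => b p
  | x, Fm.and A B => Force2 a b x A ∧ Force2 a b x B
  | x, Fm.or A B => Force2 a b x A ∨ Force2 a b x B
  | x, Fm.imp A B =>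
      ∀ y, le2 x y → Force2 a b y A → ∃ z, le2 y z ∧ Force2 a b z B

/-! ### Auxiliary derivations -/

lemma botbot : SFDeriv [Fm.bot] [Fm.bot] :=
  SFDeriv.wkR Fm.bot [Fm.bot] [] SFDeriv.botL

lemma idSeq : ∀ A : Fm, SFDeriv [A] [A]
  | Fm.bot => botbot
  | Fm.var p => SFDeriv.ax p
  | Fm.and A B =>
      SFDeriv.andR A B [Fm.and A B] []
        (SFDeriv.andL2 A B [] [A] (idSeq A))
        (SFDeriv.andL1 B A [] [B] (idSeq B))
  | Fm.or A B =>
      SFDeriv.orL A B [] [Fm.or A B]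
        (SFDeriv.orR1 A B [A] [] (idSeq A))
        (SFDeriv.orR2 B A [B] [] (idSeq B))
  | Fm.imp A B =>
      SFDeriv.impR A B [Fm.imp A B] []
        (SFDeriv.exch _ _ _ _
          (SFDeriv.impL A B [A] [] [] [B] (idSeq A) (idSeq B))
          (List.Perm.swap _ _ _) (List.Perm.refl _))

lemma negR {Θ : List Fm} {A : Fm} (h : SFDeriv (Θ ++ [A]) [Fm.dneg Fm.bot]) :
    SFDeriv Θ [Fm.neg A] :=
  SFDeriv.impR A Fm.bot Θ [] h

lemma botdneg : SFDeriv [Fm.bot] [Fm.dneg Fm.bot] :=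
  SFDeriv.wkR (Fm.dneg Fm.bot) [Fm.bot] [] SFDeriv.botL

lemma dnegIntro (A : Fm) : SFDeriv [A] [Fm.dneg A] :=
  SFDeriv.impR (Fm.neg A) Fm.bot [A] []
    (SFDeriv.impL A Fm.bot [A] [] [] [Fm.bot] (idSeq A) botbot)

lemma contrapose {A B : Fm} (h : SFDeriv [A] [B]) :
    SFDeriv [Fm.neg B] [Fm.neg A] :=
  negR (Θ := [Fm.neg B])
    (SFDeriv.exch _ _ _ _
      (SFDeriv.impL B Fm.bot [A] [] [] [Fm.bot] h botbot)
      (List.Perm.swap _ _ _) (List.Perm.refl _))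

lemma dnegMono {A B : Fm} (h : SFDeriv [A] [B]) :
    SFDeriv [Fm.dneg A] [Fm.dneg B] :=
  contrapose (contrapose h)

lemma dnegBotElim : SFDeriv [Fm.dneg Fm.bot] [] :=
  SFDeriv.impL (Fm.neg Fm.bot) Fm.bot [] [] [] []
    (negR (Θ := []) botdneg) SFDeriv.botL

lemma dneg_left_bot {A : Fm} {Θ : List Fm}
    (h : SFDeriv (A :: Θ) [Fm.dneg Fm.bot]) :
    SFDeriv (Fm.dneg A :: Θ) [Fm.dneg Fm.bot] := by
  have h1 : SFDeriv (Θ ++ [A]) [Fm.dneg Fm.bot] :=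
    SFDeriv.exch _ _ _ _ h (List.perm_append_comm (l₁ := [A]) (l₂ := Θ)) (List.Perm.refl _)
  have h2 : SFDeriv Θ [Fm.neg A] := negR h1
  have h3 : SFDeriv (Θ ++ [Fm.dneg A]) [] :=
    SFDeriv.impL (Fm.neg A) Fm.bot Θ [] [] [] h2 SFDeriv.botL
  have h4 : SFDeriv (Θ ++ [Fm.dneg A]) [Fm.dneg Fm.bot] :=
    SFDeriv.wkR (Fm.dneg Fm.bot) _ [] h3
  exact SFDeriv.exch _ _ _ _ h4 (List.perm_append_comm (l₁ := Θ) (l₂ := [Fm.dneg A])) (List.Perm.refl _)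

lemma dnegL {A C : Fm} {Θ : List Fm}
    (h : SFDeriv (A :: Θ) [Fm.dneg C]) :
    SFDeriv (Fm.dneg A :: Θ) [Fm.dneg C] := by
  have h2 : SFDeriv [Fm.neg C, Fm.dneg C] [Fm.dneg Fm.bot] :=
    SFDeriv.impL (Fm.neg C) Fm.bot [Fm.neg C] [] [] [Fm.bot] (idSeq _) botbot
  have h3 : SFDeriv (Fm.dneg C :: [Fm.neg C]) [Fm.dneg Fm.bot] :=
    SFDeriv.exch _ _ _ _ h2 (List.Perm.swap _ _ _) (List.Perm.refl _)
  have h4 : SFDeriv (A :: (Θ ++ [Fm.neg C])) [Fm.dneg Fm.bot] :=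
    SFDeriv.cut (Fm.dneg C) (A :: Θ) [] [Fm.neg C] [Fm.dneg Fm.bot] h h3
  have h5 := dneg_left_bot h4
  exact negR (Θ := Fm.dneg A :: Θ) h5

lemma dnegR_weak (A B : Fm) : SFDeriv [Fm.dneg B] [Fm.imp A B] :=
  SFDeriv.impR A B [Fm.dneg B] []
    (SFDeriv.exch _ _ _ _ (SFDeriv.wkL A _ _ (idSeq (Fm.dneg B)))
      (List.Perm.swap _ _ _) (List.Perm.refl _))

lemma imp_mp (A B : Fm) : SFDeriv [A, Fm.imp A B] [Fm.dneg B] :=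
  SFDeriv.impL A B [A] [] [] [B] (idSeq A) (idSeq B)

lemma dneg_mp (A B : Fm) : SFDeriv [Fm.dneg A, Fm.imp A B] [Fm.dneg B] :=
  dnegL (imp_mp A B)

lemma dneg_imp_mp (A B : Fm) :
    SFDeriv [Fm.dneg (Fm.imp A B), Fm.dneg A] [Fm.dneg B] :=
  dnegL (SFDeriv.exch _ _ _ _ (dneg_mp A B) (List.Perm.swap _ _ _) (List.Perm.refl _))

lemma andE1 (A B : Fm) : SFDeriv [Fm.and A B] [A] :=
  SFDeriv.andL2 A B [] [A] (idSeq A)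

lemma andE2 (A B : Fm) : SFDeriv [Fm.and A B] [B] :=
  SFDeriv.andL1 B A [] [B] (idSeq B)

lemma andIseq (A B : Fm) : SFDeriv [A, B] [Fm.and A B] :=
  SFDeriv.andR A B [A, B] []
    (SFDeriv.exch _ _ _ _ (SFDeriv.wkL B _ _ (idSeq A))
      (List.Perm.swap _ _ _) (List.Perm.refl _))
    (SFDeriv.wkL A _ _ (idSeq B))

lemma dnegAndI (A B : Fm) :
    SFDeriv [Fm.dneg A, Fm.dneg B] [Fm.dneg (Fm.and A B)] := by
  have s1 : SFDeriv [A, B, Fm.neg (Fm.and A B)] [Fm.dneg Fm.bot] :=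
    SFDeriv.impL (Fm.and A B) Fm.bot [A, B] [] [] [Fm.bot] (andIseq A B) botbot
  have s2 := dneg_left_bot s1
  have s3 : SFDeriv (B :: Fm.dneg A :: [Fm.neg (Fm.and A B)]) [Fm.dneg Fm.bot] :=
    SFDeriv.exch _ _ _ _ s2 (List.Perm.swap _ _ _) (List.Perm.refl _)
  have s4 := dneg_left_bot s3
  have s5 : SFDeriv (Fm.dneg A :: Fm.dneg B :: [Fm.neg (Fm.and A B)]) [Fm.dneg Fm.bot] :=
    SFDeriv.exch _ _ _ _ s4 (List.Perm.swap _ _ _) (List.Perm.refl _)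
  exact negR (Θ := [Fm.dneg A, Fm.dneg B]) s5

lemma orI1 (A B : Fm) : SFDeriv [A] [Fm.or A B] :=
  SFDeriv.orR1 A B [A] [] (idSeq A)

lemma orI2 (A B : Fm) : SFDeriv [A] [Fm.or B A] :=
  SFDeriv.orR2 A B [A] [] (idSeq A)

lemma orKey (A B : Fm) :
    SFDeriv [Fm.dneg (Fm.or A B)] [Fm.or (Fm.dneg A) (Fm.dneg B)] := by
  have pA : SFDeriv [A] [Fm.dneg Fm.bot, A, B] := by
    have t1 := SFDeriv.wkR B [A] [A] (idSeq A)
    have t2 := SFDeriv.wkR (Fm.dneg Fm.bot) [A] [A, B] t1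
    exact SFDeriv.exch _ _ _ _ t2
      (List.Perm.refl _) (List.perm_append_comm (l₁ := [A, B]) (l₂ := [Fm.dneg Fm.bot]))
  have pB : SFDeriv [B] [Fm.dneg Fm.bot, A, B] := by
    have t1 := SFDeriv.wkR (Fm.dneg Fm.bot) [B] [B] (idSeq B)
    have t2 := SFDeriv.wkR A [B] [B, Fm.dneg Fm.bot] t1
    exact SFDeriv.exch _ _ _ _ t2
      (List.Perm.refl _) (List.perm_append_comm (l₁ := [B]) (l₂ := [Fm.dneg Fm.bot, A]))
  have orl : SFDeriv [Fm.or A B] [Fm.dneg Fm.bot, A, B] := SFDeriv.orL A B [] _ pA pB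
  have r1 : SFDeriv [] [Fm.neg (Fm.or A B), Fm.dneg A, Fm.dneg B] :=
    SFDeriv.impR (Fm.or A B) Fm.bot [] [A, B] orl
  have r2 : SFDeriv [] [Fm.neg (Fm.or A B), Fm.dneg B, Fm.dneg A] :=
    SFDeriv.exch _ _ _ _ r1 (List.Perm.refl _) (List.Perm.cons _ (List.Perm.swap _ _ _))
  have r3 := SFDeriv.orR1 (Fm.dneg A) (Fm.dneg B) [] [Fm.neg (Fm.or A B), Fm.dneg B] r2
  have r4 : SFDeriv []
      [Fm.neg (Fm.or A B), Fm.or (Fm.dneg A) (Fm.dneg B), Fm.dneg B] :=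
    SFDeriv.exch _ _ _ _ r3 (List.Perm.refl _) (List.Perm.cons _ (List.Perm.swap _ _ _))
  have r5 := SFDeriv.orR2 (Fm.dneg B) (Fm.dneg A) []
      [Fm.neg (Fm.or A B), Fm.or (Fm.dneg A) (Fm.dneg B)] r4
  have r6 := SFDeriv.ctrR (Fm.or (Fm.dneg A) (Fm.dneg B)) [] [Fm.neg (Fm.or A B)] r5
  have r7 : SFDeriv [] [Fm.or (Fm.dneg A) (Fm.dneg B), Fm.neg (Fm.or A B)] :=
    SFDeriv.exch _ _ _ _ r6 (List.Perm.refl _) (List.Perm.swap _ _ _)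
  exact SFDeriv.impL (Fm.neg (Fm.or A B)) Fm.bot []
    [Fm.or (Fm.dneg A) (Fm.dneg B)] [] [] r7 SFDeriv.botL

lemma impOrDnegA (A B : Fm) : SFDeriv [] [Fm.or (Fm.imp A B) (Fm.dneg A)] := by
  have p : SFDeriv [A] [Fm.dneg B, A] :=
    SFDeriv.exch _ _ _ _ (SFDeriv.wkR (Fm.dneg B) [A] [A] (idSeq A))
      (List.Perm.refl _) (List.Perm.swap _ _ _)
  have q : SFDeriv [] [Fm.imp A B, Fm.dneg A] := SFDeriv.impR A B [] [A] p
  have q2 := SFDeriv.orR2 (Fm.dneg A) (Fm.imp A B) [] [Fm.imp A B] q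
  have q3 : SFDeriv [] [Fm.or (Fm.imp A B) (Fm.dneg A), Fm.imp A B] :=
    SFDeriv.exch _ _ _ _ q2 (List.Perm.refl _) (List.Perm.swap _ _ _)
  have q4 := SFDeriv.orR1 (Fm.imp A B) (Fm.dneg A) [] [Fm.or (Fm.imp A B) (Fm.dneg A)] q3
  exact SFDeriv.ctrR _ [] [] q4

/-! ### Forcing and membership helpers -/

lemma Force2_bot (a b : ℕ → Prop) (x : Bool) : Force2 a b x Fm.bot ↔ False := by
  cases x <;> exact Iff.rfl

lemma Force2_and (a b : ℕ → Prop) (x : Bool) (A B : Fm) :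
    Force2 a b x (Fm.and A B) ↔ Force2 a b x A ∧ Force2 a b x B := by
  cases x <;> exact Iff.rfl

lemma Force2_or (a b : ℕ → Prop) (x : Bool) (A B : Fm) :
    Force2 a b x (Fm.or A B) ↔ Force2 a b x A ∨ Force2 a b x B := by
  cases x <;> exact Iff.rfl

lemma Force2_imp_true (a b : ℕ → Prop) (A B : Fm) :
    Force2 a b true (Fm.imp A B) ↔ (Force2 a b true A → Force2 a b true B) := by
  constructor
  · intro h hA
    obtain ⟨z, hz, hB⟩ := h true (Or.inl rfl) hA
    cases z
    · rcases hz with h' | ⟨h', _⟩ <;> cases h'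
    · exact hB
  · intro h y hy hA
    have hy' : y = true := by
      rcases hy with h' | ⟨h', _⟩
      · exact h'.symm
      · cases h'
    subst hy'
    exact ⟨true, Or.inl rfl, h hA⟩

lemma Force2_imp_false (a b : ℕ → Prop) (A B : Fm) :
    Force2 a b false (Fm.imp A B) ↔
      ((Force2 a b false A → Force2 a b false B ∨ Force2 a b true B) ∧
       (Force2 a b true A → Force2 a b true B)) := by
  constructor
  · intro h
    refine ⟨fun hA => ?_, fun hA => ?_⟩
    · obtain ⟨z, _, hB⟩ := h false (Or.inl rfl) hA
      cases z
      · exact Or.inl hB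
      · exact Or.inr hB
    · obtain ⟨z, hz, hB⟩ := h true (Or.inr ⟨rfl, rfl⟩) hA
      cases z
      · rcases hz with h' | ⟨h', _⟩ <;> cases h'
      · exact hB
  · rintro ⟨h1, h2⟩ y hy hA
    cases y
    · rcases h1 hA with hB | hB
      · exact ⟨false, Or.inl rfl, hB⟩
      · exact ⟨true, Or.inr ⟨rfl, rfl⟩, hB⟩
    · exact ⟨true, Or.inl rfl, h2 hA⟩

lemma FmOver_var {V : Set ℕ} {p : ℕ} : Fm.var p ∈ FmOver V ↔ p ∈ V := by
  simp [FmOver, Fm.vars]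

lemma FmOver_and {V : Set ℕ} {A B : Fm} :
    Fm.and A B ∈ FmOver V ↔ A ∈ FmOver V ∧ B ∈ FmOver V := by
  simp [FmOver, Fm.vars, or_imp, forall_and]

lemma FmOver_or {V : Set ℕ} {A B : Fm} :
    Fm.or A B ∈ FmOver V ↔ A ∈ FmOver V ∧ B ∈ FmOver V := by
  simp [FmOver, Fm.vars, or_imp, forall_and]

lemma FmOver_imp {V : Set ℕ} {A B : Fm} :
    Fm.imp A B ∈ FmOver V ↔ A ∈ FmOver V ∧ B ∈ FmOver V := by
  simp [FmOver, Fm.vars, or_imp, forall_and]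

lemma FmOver_dneg {V : Set ℕ} {A : Fm} :
    Fm.dneg A ∈ FmOver V ↔ A ∈ FmOver V := by
  simp [FmOver, Fm.dneg, Fm.vars]

/-- truth lemma.  Given finite Γ, Δ and a prime theory Γ* with
respect to Fm(Γ ∪ Δ) with ⟨Γ*, Δ⟩ consistent, the two-node Kripke model with root
k = `false` (forcing p iff p ∈ Γ*) and top k' = `true` (forcing p iff ¬¬p ∈ Γ*)
is a strict finitistic model, and for every A ∈ Fm(Γ ∪ Δ): ¬¬A ∈ Γ* iff k'
forces A, and A ∈ Γ* iff k forces A. -/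

theorem truth_lemma (Γ Δ : Finset Fm) (Γs : Set Fm)
    (hprime : PrimeTheory Γs (FmOver (varsOf ((Γ : Set Fm) ∪ (Δ : Set Fm)))))
    (hcons : ¬ DerivFrom Γs (Δ : Set Fm)) :
    ((∀ p, Fm.var p ∈ Γs → Fm.dneg (Fm.var p) ∈ Γs) ∧
     (∀ p, (Fm.var p ∈ Γs ∨ Fm.dneg (Fm.var p) ∈ Γs) → Fm.dneg (Fm.var p) ∈ Γs) ∧
     {p | Fm.var p ∈ Γs}.Finite ∧ {p | Fm.dneg (Fm.var p) ∈ Γs}.Finite) ∧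
    (∀ A ∈ FmOver (varsOf ((Γ : Set Fm) ∪ (Δ : Set Fm))),
      (Fm.dneg A ∈ Γs ↔
        Force2 (fun p => Fm.var p ∈ Γs) (fun p => Fm.dneg (Fm.var p) ∈ Γs) true A) ∧
      (A ∈ Γs ↔
        Force2 (fun p => Fm.var p ∈ Γs) (fun p => Fm.dneg (Fm.var p) ∈ Γs) false A)) := by
  set V : Set ℕ := varsOf ((Γ : Set Fm) ∪ (Δ : Set Fm)) with hVdef
  obtain ⟨hsub, hdisj, hclose⟩ := hprime
  -- closure under single-conclusion derivation
  have m : ∀ A ∈ FmOver V, ∀ L : List Fm, (∀ C ∈ L, C ∈ Γs) → SFDeriv L [A] → A ∈ Γs :=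
    fun A hA L hL h => hclose A hA ⟨L, hL, h⟩
  have hdmem : ∀ {A : Fm}, A ∈ FmOver V → Fm.dneg A ∈ FmOver V :=
    fun h => FmOver_dneg.mpr h
  have hdneg_of : ∀ {A : Fm}, A ∈ FmOver V → A ∈ Γs → Fm.dneg A ∈ Γs := by
    intro A hA h
    refine m _ (hdmem hA) [A] ?_ (dnegIntro A)
    intro C hC
    rcases List.mem_singleton.mp hC with rfl
    exact h
  have hbot : Fm.bot ∉ Γs := by
    intro h
    refine hcons ⟨[Fm.bot], [], ?_, ?_, SFDeriv.botL⟩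
    · intro C hC
      rcases List.mem_singleton.mp hC with rfl
      exact h
    · intro B hB
      cases hB
  have hdbot : Fm.dneg Fm.bot ∉ Γs := by
    intro h
    refine hcons ⟨[Fm.dneg Fm.bot], [], ?_, ?_, dnegBotElim⟩
    · intro C hC
      rcases List.mem_singleton.mp hC with rfl
      exact h
    · intro B hB
      cases hB
  have hVfin : V.Finite := by
    rw [hVdef]
    exact Set.Finite.biUnion (Γ.finite_toSet.union Δ.finite_toSet)
      (fun A _ => A.vars.finite_toSet)
  refine ⟨⟨?_, ?_, ?_, ?_⟩, ?_⟩
  · intro p hp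
    exact hdneg_of (hsub hp) hp
  · rintro p (hp | hp)
    · exact hdneg_of (hsub hp) hp
    · exact hp
  · exact hVfin.subset (fun p hp => FmOver_var.mp (hsub hp))
  · refine hVfin.subset (fun p hp => ?_)
    exact FmOver_var.mp (FmOver_dneg.mp (hsub hp))
  · intro A
    induction A with
    | bot =>
      intro _
      refine ⟨?_, ?_⟩
      · rw [Force2_bot]
        exact ⟨fun h => hdbot h, fun h => h.elim⟩
      · rw [Force2_bot]
        exact ⟨fun h => hbot h, fun h => h.elim⟩
    | var p =>
      intro _
      exact ⟨Iff.rfl, Iff.rfl⟩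
    | and A B ihA ihB =>
      intro h
      have hA : A ∈ FmOver V := (FmOver_and.mp h).1
      have hB : B ∈ FmOver V := (FmOver_and.mp h).2
      have iA := ihA hA
      have iB := ihB hB
      have two : ∀ {X Y : Fm}, X ∈ Γs → Y ∈ Γs → ∀ C ∈ [X, Y], C ∈ Γs := by
        intro X Y hX hY C hC
        rcases List.mem_cons.mp hC with rfl | hC
        · exact hX
        rcases List.mem_singleton.mp hC with rfl
        exact hY
      have one : ∀ {X : Fm}, X ∈ Γs → ∀ C ∈ [X], C ∈ Γs := by
        intro X hX C hC
        rcases List.mem_singleton.mp hC with rfl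
        exact hX
      have e2 : Fm.and A B ∈ Γs ↔ (A ∈ Γs ∧ B ∈ Γs) := by
        constructor
        · intro hh
          exact ⟨m A hA [_] (one hh) (andE1 A B), m B hB [_] (one hh) (andE2 A B)⟩
        · rintro ⟨h1, h2⟩
          exact m _ h [A, B] (two h1 h2) (andIseq A B)
      have e1 : Fm.dneg (Fm.and A B) ∈ Γs ↔ (Fm.dneg A ∈ Γs ∧ Fm.dneg B ∈ Γs) := by
        constructor
        · intro hh
          exact ⟨m _ (hdmem hA) [_] (one hh) (dnegMono (andE1 A B)),
                 m _ (hdmem hB) [_] (one hh) (dnegMono (andE2 A B))⟩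
        · rintro ⟨h1, h2⟩
          exact m _ (hdmem h) [Fm.dneg A, Fm.dneg B] (two h1 h2) (dnegAndI A B)
      constructor
      · rw [Force2_and, e1]
        exact and_congr iA.1 iB.1
      · rw [Force2_and, e2]
        exact and_congr iA.2 iB.2
    | or A B ihA ihB =>
      intro h
      have hA : A ∈ FmOver V := (FmOver_or.mp h).1
      have hB : B ∈ FmOver V := (FmOver_or.mp h).2
      have iA := ihA hA
      have iB := ihB hB
      have one : ∀ {X : Fm}, X ∈ Γs → ∀ C ∈ [X], C ∈ Γs := by
        intro X hX C hC
        rcases List.mem_singleton.mp hC with rfl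
        exact hX
      have e2 : Fm.or A B ∈ Γs ↔ (A ∈ Γs ∨ B ∈ Γs) := by
        constructor
        · intro hh
          exact hdisj A hA B hB hh
        · rintro (h1 | h1)
          · exact m _ h [A] (one h1) (orI1 A B)
          · exact m _ h [B] (one h1) (orI2 B A)
      have e1 : Fm.dneg (Fm.or A B) ∈ Γs ↔ (Fm.dneg A ∈ Γs ∨ Fm.dneg B ∈ Γs) := by
        constructor
        · intro hh
          have hX : Fm.or (Fm.dneg A) (Fm.dneg B) ∈ Γs :=
            m _ (FmOver_or.mpr ⟨hdmem hA, hdmem hB⟩) [_] (one hh) (orKey A B)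
          exact hdisj _ (hdmem hA) _ (hdmem hB) hX
        · rintro (h1 | h1)
          · exact m _ (hdmem h) [Fm.dneg A] (one h1) (dnegMono (orI1 A B))
          · exact m _ (hdmem h) [Fm.dneg B] (one h1) (dnegMono (orI2 B A))
      constructor
      · rw [Force2_or, e1]
        exact or_congr iA.1 iB.1
      · rw [Force2_or, e2]
        exact or_congr iA.2 iB.2
    | imp A B ihA ihB =>
      intro h
      have hA : A ∈ FmOver V := (FmOver_imp.mp h).1
      have hB : B ∈ FmOver V := (FmOver_imp.mp h).2
      have iA := ihA hA
      have iB := ihB hB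
      have two : ∀ {X Y : Fm}, X ∈ Γs → Y ∈ Γs → ∀ C ∈ [X, Y], C ∈ Γs := by
        intro X Y hX hY C hC
        rcases List.mem_cons.mp hC with rfl | hC
        · exact hX
        rcases List.mem_singleton.mp hC with rfl
        exact hY
      have one : ∀ {X : Fm}, X ∈ Γs → ∀ C ∈ [X], C ∈ Γs := by
        intro X hX C hC
        rcases List.mem_singleton.mp hC with rfl
        exact hX
      have key : Fm.imp A B ∈ Γs ↔ (Fm.dneg A ∈ Γs → Fm.dneg B ∈ Γs) := by
        constructor
        · intro hh ha
          exact m _ (hdmem hB) [Fm.dneg A, Fm.imp A B] (two ha hh) (dneg_mp A B)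
        · intro hf
          have hX : Fm.or (Fm.imp A B) (Fm.dneg A) ∈ Γs :=
            m _ (FmOver_or.mpr ⟨h, hdmem hA⟩) [] (by intro C hC; cases hC)
              (impOrDnegA A B)
          rcases hdisj _ h _ (hdmem hA) hX with h1 | h1
          · exact h1
          · exact m _ h [Fm.dneg B] (one (hf h1)) (dnegR_weak A B)
      have key2 : Fm.dneg (Fm.imp A B) ∈ Γs ↔ (Fm.dneg A ∈ Γs → Fm.dneg B ∈ Γs) := by
        constructor
        · intro hh ha
          exact m _ (hdmem hB) [Fm.dneg (Fm.imp A B), Fm.dneg A] (two hh ha)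
            (dneg_imp_mp A B)
        · intro hf
          exact hdneg_of h (key.mpr hf)
      constructor
      · rw [Force2_imp_true, key2, ← iA.1, ← iB.1]
      · rw [Force2_imp_false, key, ← iA.1, ← iB.1, ← iA.2, ← iB.2]
        constructor
        · intro hf
          exact ⟨fun ha => Or.inr (hf (hdneg_of hA ha)), hf⟩
        · exact fun hc => hc.2
end

section
/- Fix the two-node frame F = ({r, k}, ≤) with r < k, let v be a strict finitistic valuation on F, let ⊨ denote strict finitistic forcing and ⊩ denote intuitionistic forcing on (F, v). Then for every formula A: (i) k ⊩ A iff k ⊨ A; (ii) if r ⊩ A then r ⊨ A; (iii) if A is forced at both nodes under ⊩ then A is forced at both nodes under ⊨. -/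
/-- Intuitionistic forcing on the two-node frame, where the valuation is given by
`a p` (the root r = `false` forces p) and `b p` (the top k = `true` forces p). -/
def IForce2 (a b : ℕ → Prop) : Bool → Fm → Prop
  | _, Fm.bot => False
  | false, Fm.var p => a p
  | true, Fm.var p => b p
  | x, Fm.and A B => IForce2 a b x A ∧ IForce2 a b x B
  | x, Fm.or A B => IForce2 a b x A ∨ IForce2 a b x B
  | x, Fm.imp A B => ∀ y, le2 x y → IForce2 a b y A → IForce2 a b y B

lemma le2_refl (x : Bool) : le2 x x := Or.inl rfl

lemma le2_top (y : Bool) : le2 y true := by cases y <;> simp [le2]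

lemma le2_of_true {y : Bool} (h : le2 true y) : y = true := by
  rcases h with h | ⟨h, _⟩ <;> simp_all

lemma force2_mono (a b : ℕ → Prop) (hup : ∀ p, a p → b p) :
    ∀ A : Fm, Force2 a b false A → Force2 a b true A := by
  intro A
  induction A with
  | bot => exact id
  | var p => exact hup p
  | and A B ihA ihB => exact fun h => ⟨ihA h.1, ihB h.2⟩
  | or A B ihA ihB => exact fun h => h.elim (fun h => Or.inl (ihA h)) (fun h => Or.inr (ihB h))
  | imp A B ihA ihB =>
      intro h y hy hA
      have := le2_of_true hy
      subst this
      exact h true (le2_top false) hA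

lemma eq_top (a b : ℕ → Prop) :
    ∀ A : Fm, IForce2 a b true A ↔ Force2 a b true A := by
  intro A
  induction A with
  | bot => exact Iff.rfl
  | var p => exact Iff.rfl
  | and A B ihA ihB => exact and_congr ihA ihB
  | or A B ihA ihB => exact or_congr ihA ihB
  | imp A B ihA ihB =>
      constructor
      · intro h y hy hA
        have := le2_of_true hy; subst this
        exact ⟨true, le2_refl true, ihB.mp (h true (le2_refl true) (ihA.mpr hA))⟩
      · intro h y hy hA
        have := le2_of_true hy; subst this
        obtain ⟨z, hz, hB⟩ := h true (le2_refl true) (ihA.mp hA)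
        have := le2_of_true hz; subst this
        exact ihB.mpr hB

lemma down_root (a b : ℕ → Prop) (hup : ∀ p, a p → b p) :
    ∀ A : Fm, IForce2 a b false A → Force2 a b false A := by
  intro A
  induction A with
  | bot => exact id
  | var p => exact id
  | and A B ihA ihB => exact fun h => ⟨ihA h.1, ihB h.2⟩
  | or A B ihA ihB => exact fun h => h.elim (fun h => Or.inl (ihA h)) (fun h => Or.inr (ihB h))
  | imp A B _ _ =>
      intro h y hy hA
      refine ⟨true, le2_top y, ?_⟩
      have hAt : Force2 a b true A := by
        cases y with
        | false => exact force2_mono a b hup A hA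
        | true => exact hA
      have := h true (le2_top false) ((eq_top a b A).mpr hAt)
      exact (eq_top a b B).mp this

/-- on the two-node frame F (root r = `false` < k = `true`) with a
strict finitistic valuation: (i) at k intuitionistic and strict finitistic
forcing agree; (ii) at r intuitionistic forcing implies strict finitistic
forcing; (iii) intuitionistic validity implies strict finitistic validity. -/
theorem int_vs_sf_two_node (a b : ℕ → Prop)
    (hup : ∀ p, a p → b p)
    (hprev : ∀ p, (a p ∨ b p) → b p)
    (hfa : {p | a p}.Finite) (hfb : {p | b p}.Finite) (A : Fm) :
    (IForce2 a b true A ↔ Force2 a b true A) ∧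
    (IForce2 a b false A → Force2 a b false A) ∧
    ((∀ x : Bool, IForce2 a b x A) → ∀ x : Bool, Force2 a b x A) := by
  refine ⟨eq_top a b A, down_root a b hup A, fun h x => ?_⟩
  cases x with
  | false => exact down_root a b hup A (h false)
  | true => exact (eq_top a b A).mp (h true)
end

section
/- G-to-J transformation: let G = (𝒰, ≼) be a generation structure, and let I_G be the intuitionistic Kripke model on the frame (𝒰, ≼) with valuation defined by W ∈ v(p) iff there is a node k of W with W, k ⊨_G p. Then for every W ∈ 𝒰 and every formula A: W intuitionistically forces A in I_G if and only if there is a node k of W such that W, k ⊨_G A. -/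
/-- A finite strict finitistic model whose nodes are drawn from a common
universe N (so that models can be compared by the generation order). -/
structure FinModel (N : Type) where
  carrier : Set N
  fin : carrier.Finite
  le : N → N → Prop
  le_mem : ∀ x y, le x y → x ∈ carrier ∧ y ∈ carrier
  le_refl : ∀ x ∈ carrier, le x x
  le_antisymm : ∀ x y, le x y → le y x → x = y
  le_trans : ∀ x y z, le x y → le y z → le x z
  root : N
  root_mem : root ∈ carrier
  root_le : ∀ x ∈ carrier, le root x
  pred_linear : ∀ k l m, le l k → le m k → le l m ∨ le m l
  val : ℕ → Set N
  val_sub : ∀ p, val p ⊆ carrier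
  val_up : ∀ p x y, le x y → x ∈ val p → y ∈ val p
  fin_verif : ∀ x, {p | x ∈ val p}.Finite
  atomic_prev : ∀ p, (∃ x, x ∈ val p) → ∀ l ∈ carrier, ∃ l', le l l' ∧ l' ∈ val p

/-- The generation order: W₁ ≼ W₂ iff the nodes of W₁ are among those of W₂,
the orders agree on W₁, and the valuation of W₁ is contained in that of W₂. -/
def genLe {N : Type} (W₁ W₂ : FinModel N) : Prop :=
  W₁.carrier ⊆ W₂.carrier ∧
  (∀ x y, x ∈ W₁.carrier → y ∈ W₁.carrier → (W₁.le x y ↔ W₂.le x y)) ∧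
  ∀ p, W₁.val p ⊆ W₂.val p

/-- Generation forcing ⊨_G on pairs (W, k) with W a model in the generation
structure and k a node of W. -/
def GForce {N : Type} (U : Set (FinModel N)) : FinModel N → N → Fm → Prop
  | _, _, Fm.bot => False
  | W, k, Fm.var p => k ∈ W.val p
  | W, k, Fm.and A B => GForce U W k A ∧ GForce U W k B
  | W, k, Fm.or A B => GForce U W k A ∨ GForce U W k B
  | W, k, Fm.imp A B =>
      ∀ W', W' ∈ U → genLe W W' →
        ∀ k', k' ∈ W'.carrier → W'.le k k' → GForce U W' k' A →
          ∃ k'', W'.le k' k'' ∧ GForce U W' k'' B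

/-- Intuitionistic forcing on the induced intuitionistic Kripke model I_G over
the frame (U, ≼), whose valuation puts W ∈ v(p) iff some node of W forces p. -/
def IForceG {N : Type} (U : Set (FinModel N)) : FinModel N → Fm → Prop
  | W, Fm.bot => False
  | W, Fm.var p => ∃ k, k ∈ W.carrier ∧ k ∈ W.val p
  | W, Fm.and A B => IForceG U W A ∧ IForceG U W B
  | W, Fm.or A B => IForceG U W A ∨ IForceG U W B
  | W, Fm.imp A B => ∀ W', W' ∈ U → genLe W W' → IForceG U W' A → IForceG U W' B


/-- Generation forcing is monotone along the node order within a model. -/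
theorem gforce_mono {N : Type} (U : Set (FinModel N)) :
    ∀ A : Fm, ∀ W : FinModel N, ∀ k k', W.le k k' →
      GForce U W k A → GForce U W k' A := by
  intro A
  induction A with
  | bot => intro W k k' _ h; exact h
  | var p => intro W k k' hle h; exact W.val_up p k k' hle h
  | and A B ihA ihB =>
      intro W k k' hle h
      exact ⟨ihA W k k' hle h.1, ihB W k k' hle h.2⟩
  | or A B ihA ihB =>
      intro W k k' hle h
      rcases h with h | h
      · exact Or.inl (ihA W k k' hle h)
      · exact Or.inr (ihB W k k' hle h)
  | imp A B ihA ihB =>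
      intro W k k' hle h W' hW' hgen m hm hmle hmA
      have hk : k ∈ W.carrier := (W.le_mem k k' hle).1
      have hk' : k' ∈ W.carrier := (W.le_mem k k' hle).2
      have hle' : W'.le k k' := (hgen.2.1 k k' hk hk').mp hle
      exact h W' hW' hgen m hm (W'.le_trans k k' m hle' hmle) hmA

/-- Prevalence: if some node of W forces A, every node of W has a successor
forcing A. -/
theorem gforce_prev {N : Type} (U : Set (FinModel N)) :
    ∀ A : Fm, ∀ W, W ∈ U → (∃ k ∈ W.carrier, GForce U W k A) →
      ∀ l ∈ W.carrier, ∃ l', W.le l l' ∧ l' ∈ W.carrier ∧ GForce U W l' A := by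
  intro A
  induction A with
  | bot => rintro W _ ⟨k, _, h⟩; exact absurd h id
  | var p =>
      rintro W _ ⟨k, hk, h⟩ l hl
      obtain ⟨l', hll', hl'⟩ := W.atomic_prev p ⟨k, h⟩ l hl
      exact ⟨l', hll', W.val_sub p hl', hl'⟩
  | and A B ihA ihB =>
      rintro W hW ⟨k, hk, hA, hB⟩ l hl
      obtain ⟨l1, hll1, hl1, hA1⟩ := ihA W hW ⟨k, hk, hA⟩ l hl
      obtain ⟨l2, hl12, hl2, hB2⟩ := ihB W hW ⟨k, hk, hB⟩ l1 hl1
      exact ⟨l2, W.le_trans l l1 l2 hll1 hl12, hl2,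
        gforce_mono U A W l1 l2 hl12 hA1, hB2⟩
  | or A B ihA ihB =>
      rintro W hW ⟨k, hk, hAB⟩ l hl
      rcases hAB with hA | hB
      · obtain ⟨l', h1, h2, h3⟩ := ihA W hW ⟨k, hk, hA⟩ l hl
        exact ⟨l', h1, h2, Or.inl h3⟩
      · obtain ⟨l', h1, h2, h3⟩ := ihB W hW ⟨k, hk, hB⟩ l hl
        exact ⟨l', h1, h2, Or.inr h3⟩
  | imp A B ihA ihB =>
      rintro W hW ⟨k, hk, h⟩ l hl
      refine ⟨l, W.le_refl l hl, hl, ?_⟩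
      intro W' hW' hgen k' hk' hlk' hA
      have hkW' : k ∈ W'.carrier := hgen.1 hk
      -- find a node above k in W' forcing A
      obtain ⟨m, hkm, hm, hmA⟩ := ihA W' hW' ⟨k', hk', hA⟩ k hkW'
      -- apply the implication at k
      obtain ⟨n, hmn, hnB⟩ := h W' hW' hgen m hm hkm hmA
      have hn : n ∈ W'.carrier := (W'.le_mem m n hmn).2
      -- prevail B above k'
      obtain ⟨k'', hk'k'', _, hB⟩ := ihB W' hW' ⟨n, hn, hnB⟩ k' hk'
      exact ⟨k'', hk'k'', hB⟩

theorem g_to_j_aux {N : Type} (U : Set (FinModel N)) :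
    ∀ A : Fm, ∀ W, W ∈ U →
      (IForceG U W A ↔ ∃ k ∈ W.carrier, GForce U W k A) := by
  intro A
  induction A with
  | bot =>
      intro W _
      simp only [IForceG, GForce]
      exact ⟨fun h => h.elim, fun ⟨k, _, h⟩ => h⟩
  | var p =>
      intro W _
      constructor
      · rintro ⟨k, hk, hv⟩; exact ⟨k, hk, hv⟩
      · rintro ⟨k, hk, hv⟩; exact ⟨k, hk, hv⟩
  | and A B ihA ihB =>
      intro W hW
      constructor
      · rintro ⟨hA, hB⟩
        obtain ⟨k1, hk1, h1⟩ := (ihA W hW).mp hA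
        obtain ⟨k2, hk2, h2⟩ := (ihB W hW).mp hB
        obtain ⟨l, hle, hl, h2'⟩ := gforce_prev U B W hW ⟨k2, hk2, h2⟩ k1 hk1
        exact ⟨l, hl, gforce_mono U A W k1 l hle h1, h2'⟩
      · rintro ⟨k, hk, h1, h2⟩
        exact ⟨(ihA W hW).mpr ⟨k, hk, h1⟩, (ihB W hW).mpr ⟨k, hk, h2⟩⟩
  | or A B ihA ihB =>
      intro W hW
      constructor
      · rintro (h | h)
        · obtain ⟨k, hk, h'⟩ := (ihA W hW).mp h
          exact ⟨k, hk, Or.inl h'⟩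
        · obtain ⟨k, hk, h'⟩ := (ihB W hW).mp h
          exact ⟨k, hk, Or.inr h'⟩
      · rintro ⟨k, hk, h | h⟩
        · exact Or.inl ((ihA W hW).mpr ⟨k, hk, h⟩)
        · exact Or.inr ((ihB W hW).mpr ⟨k, hk, h⟩)
  | imp A B ihA ihB =>
      intro W hW
      constructor
      · intro h
        refine ⟨W.root, W.root_mem, ?_⟩
        intro W' hW' hgen k' hk' _ hA
        have hIA : IForceG U W' A := (ihA W' hW').mpr ⟨k', hk', hA⟩
        have hIB : IForceG U W' B := h W' hW' hgen hIA
        obtain ⟨m, hm, hmB⟩ := (ihB W' hW').mp hIB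
        obtain ⟨k'', h1, _, h3⟩ := gforce_prev U B W' hW' ⟨m, hm, hmB⟩ k' hk'
        exact ⟨k'', h1, h3⟩
      · rintro ⟨k, hk, h⟩ W' hW' hgen hIA
        obtain ⟨m, hm, hmA⟩ := (ihA W' hW').mp hIA
        have hkW' : k ∈ W'.carrier := hgen.1 hk
        obtain ⟨m', hkm', hm', hA'⟩ :=
          gforce_prev U A W' hW' ⟨m, hm, hmA⟩ k hkW'
        obtain ⟨n, _, hnB⟩ := h W' hW' hgen m' hm' hkm' hA'
        exact (ihB W' hW').mpr ⟨n, (W'.le_mem m' n (by assumption)).2, hnB⟩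

/-- G-to-J transformation: on a generation structure G = (U, ≼)
(an at most countable, rooted tree-like set of finite strict finitistic models
under the generation order), a model W intuitionistically forces A in the
induced model I_G iff some node k of W satisfies W, k ⊨_G A. -/
theorem g_to_j_transformation {N : Type} (U : Set (FinModel N))
    (hcount : U.Countable)
    (hroot : ∃ R ∈ U, ∀ W ∈ U, genLe R W)
    (htree : ∀ W ∈ U, ∀ W₁ ∈ U, ∀ W₂ ∈ U,
      genLe W₁ W → genLe W₂ W → genLe W₁ W₂ ∨ genLe W₂ W₁) :
    ∀ W ∈ U, ∀ A : Fm,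
      IForceG U W A ↔ ∃ k ∈ W.carrier, GForce U W k A := by
  intro W hW A
  exact g_to_j_aux U A W hW
end
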